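/- arXiv:1908.07791 — 5 statements merged into one kernel-verified Lean document; each statement's English description precedes it below -/
import Mathlib

section
/- Let K be a cubic number field, c ∈ K nonzero, and E: y^2 = x^3 + c. Then E(K) contains points of order 3 if and only if either c is a square in K, or (−3c is a square in K and 4c is a cube in K); in each such case E(K)[3] ≅ ℤ/3ℤ. -/
open WeierstrassCurve WeierstrassCurve.Affine Polynomial IntermediateField

/-- The Mordell curve `y² = x³ + c` as a Weierstrass curve in affine form. -/
def mordell {K : Type*} [CommRing K] (c : K) : WeierstrassCurve.Affine K :=
  { a₁ := 0, a₂ := 0, a₃ := 0, a₄ := 0, a₆ := c }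

section Aux

variable {K : Type*} [Field K] {c : K}

lemma mordell_equation {x y : K} : (mordell c).Equation x y ↔ y ^ 2 = x ^ 3 + c := by
  rw [equation_iff]; simp [mordell]

lemma mordell_negY (x y : K) : (mordell c).negY x y = -y := by
  simp [negY, mordell]

lemma some_eq_some_iff {W : WeierstrassCurve.Affine K} {x1 y1 x2 y2 : K} {h1 : W.Nonsingular x1 y1}
    {h2 : W.Nonsingular x2 y2} :
    Point.some _ _ h1 = Point.some _ _ h2 ↔ x1 = x2 ∧ y1 = y2 := by
  constructor
  · intro h
    injection h with hx hy
    exact ⟨hx, hy⟩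
  · rintro ⟨rfl, rfl⟩
    rfl

variable [CharZero K]

lemma mordell_nonsingular (hc : c ≠ 0) {x y : K} (h : (mordell c).Equation x y) :
    (mordell c).Nonsingular x y := by
  rw [nonsingular_iff]
  refine ⟨h, ?_⟩
  rw [mordell_equation] at h
  by_cases hy : y = 0
  · left
    subst hy
    simp only [mordell]
    intro h0
    have hx : x ≠ 0 := by
      rintro rfl
      simp at h
      exact hc h.symm
    simpa [pow_eq_zero_iff, hx] using h0.symm
  · right
    simp only [mordell]
    intro h0
    apply hy
    have h2 : (2 : K) * y = 0 := by linear_combination h0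
    simpa using h2

open Classical in
lemma mordell_three_smul {x y : K} (h : (mordell c).Nonsingular x y) :
    (3 : ℤ) • (Point.some _ _ h) = 0 ↔ y ≠ 0 ∧ x * (x ^ 3 + 4 * c) = 0 := by
  have heq : y ^ 2 = x ^ 3 + c := mordell_equation.mp h.1
  have h3 : (3 : ℤ) • (Point.some _ _ h) = Point.some _ _ h + Point.some _ _ h + Point.some _ _ h := by
    rw [show (3:ℤ) = 1+1+1 by norm_num, add_zsmul, add_zsmul, one_zsmul]
  rw [h3, add_eq_zero_iff_eq_neg]
  by_cases hy : y = 0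
  · subst hy
    rw [Point.add_self_of_Y_eq (by rw [mordell_negY]; ring)]
    simp only [ne_eq, not_true_eq_false, false_and, iff_false]
    intro h0
    exact Point.some_ne_zero h (by rw [← neg_eq_zero, ← h0])
  · have hy' : y ≠ (mordell c).negY x y := by
      rw [mordell_negY]
      intro hh
      apply hy
      have h2 : (2:K) * y = 0 := by linear_combination hh
      simpa using h2
    rw [Point.add_self_of_Y_ne hy', Point.neg_some, some_eq_some_iff]
    set sl := (mordell c).slope x x y y with hsl
    have hslv : sl = 3 * x ^ 2 / (2 * y) := by
      rw [hsl, slope_of_Y_ne rfl hy', mordell_negY]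
      simp only [mordell]
      ring_nf
    have hy2 : (2:K) * y ≠ 0 := by simp [hy]
    have hax : (mordell c).addX x x sl = sl ^ 2 - 2 * x := by
      simp only [addX, mordell]; ring
    have iden : (mordell c).addX x x sl - x = (-3 * (x * (x ^ 3 + 4 * c))) / ((2*y) ^ 2) := by
      rw [hax, hslv]
      field_simp
      linear_combination (-12 * x) * heq
    have key : (mordell c).addX x x sl = x ↔ x * (x ^ 3 + 4 * c) = 0 := by
      rw [← sub_eq_zero, iden, _root_.div_eq_zero_iff]
      constructor
      · rintro (h0 | h0)
        · rcases mul_eq_zero.mp h0 with h0 | h0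
          · norm_num at h0
          · exact h0
        · exact absurd h0 (pow_ne_zero 2 hy2)
      · intro h0
        left
        rw [h0, mul_zero]
    constructor
    · rintro ⟨hx0, -⟩
      exact ⟨hy, key.mp hx0⟩
    · rintro ⟨-, hx0⟩
      have hx : (mordell c).addX x x sl = x := key.mpr hx0
      refine ⟨hx, ?_⟩
      rw [mordell_negY]
      simp only [addY, negAddY, mordell_negY, hx]
      ring

end Aux

lemma no_sqrt_neg3 (K : Type*) [Field K] [NumberField K]
    (hdeg : Module.finrank ℚ K = 3) : ¬ IsSquare (-3 : K) := by
  rintro ⟨t, ht⟩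
  have ht' : t ^ 2 = -3 := by rw [ht]; ring
  have hirr : Irreducible ((X : ℚ[X]) ^ 2 - C (-3)) := by
    apply X_pow_sub_C_irreducible_of_prime Nat.prime_two
    intro b hb
    have hb2 : (0:ℚ) ≤ b ^ 2 := sq_nonneg b
    rw [hb] at hb2
    norm_num at hb2
  have haev : Polynomial.aeval t ((X : ℚ[X]) ^ 2 - C (-3)) = 0 := by
    simp [ht']
  have hmin : minpoly ℚ t = (X : ℚ[X]) ^ 2 - C (-3) :=
    (minpoly.eq_of_irreducible_of_monic hirr haev (by monicity!)).symm
  have hint : IsIntegral ℚ t := ⟨_, (by monicity! : ((X : ℚ[X]) ^ 2 - C (-3)).Monic), haev⟩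
  have hfr : Module.finrank ℚ ℚ⟮t⟯ = 2 := by
    rw [IntermediateField.adjoin.finrank hint, hmin]
    compute_degree!
  have hd : Module.finrank ℚ ℚ⟮t⟯ ∣ Module.finrank ℚ K :=
    ⟨Module.finrank ℚ⟮t⟯ K, (Module.finrank_mul_finrank ℚ ℚ⟮t⟯ K).symm⟩
  rw [hfr, hdeg] at hd
  norm_num at hd

open Classical in
theorem stmt_5 (K : Type*) [Field K] [NumberField K]
    (hdeg : Module.finrank ℚ K = 3) (c : K) (hc : c ≠ 0) :
    ((∃ P : (mordell c).Point, addOrderOf P = 3) ↔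
      (IsSquare c ∨ (IsSquare (-3 * c) ∧ ∃ a : K, a ^ 3 = 4 * c))) ∧
    ((∃ P : (mordell c).Point, addOrderOf P = 3) →
      Nonempty ((AddMonoidHom.ker (smulAddHom ℤ (mordell c).Point (3 : ℤ))) ≃+ ZMod 3)) := by
  have hns3 : ¬ IsSquare (-3 : K) := no_sqrt_neg3 K hdeg
  have hconv : ∀ P : (mordell c).Point, (3:ℤ) • P = (3:ℕ) • P := fun P => by
    rw [show (3:ℤ) = ((3:ℕ):ℤ) by norm_num, natCast_zsmul]
  have horder : ∀ P : (mordell c).Point, addOrderOf P = 3 ↔ (P ≠ 0 ∧ (3:ℤ) • P = 0) := by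
    intro P
    constructor
    · intro hP
      refine ⟨fun h0 => by rw [h0, addOrderOf_zero] at hP; norm_num at hP, ?_⟩
      have hz := addOrderOf_nsmul_eq_zero P
      rw [hP] at hz
      rw [hconv]
      exact hz
    · rintro ⟨hP0, hP3⟩
      have hd : addOrderOf P ∣ 3 := addOrderOf_dvd_of_nsmul_eq_zero (by rw [← hconv]; exact hP3)
      rcases (Nat.prime_three.eq_one_or_self_of_dvd _ hd) with h1 | h3
      · rw [AddMonoid.addOrderOf_eq_one_iff] at h1
        exact absurd h1 hP0
      · exact h3
  constructor
  · constructor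
    · rintro ⟨P, hP⟩
      rw [horder] at hP
      obtain ⟨hP0, hP3⟩ := hP
      cases P with
      | zero => exact absurd rfl hP0
      | @some x y h =>
        obtain ⟨hy, hx⟩ := (mordell_three_smul h).mp hP3
        have heq : y ^ 2 = x ^ 3 + c := mordell_equation.mp h.1
        rcases mul_eq_zero.mp hx with hx0 | hx4
        · left
          exact ⟨y, by subst hx0; linear_combination -heq⟩
        · right
          refine ⟨⟨y, by linear_combination -heq - hx4⟩, ⟨-x, by linear_combination -hx4⟩⟩
    · rintro (⟨s, hs⟩ | ⟨⟨t, ht⟩, ⟨a, ha⟩⟩)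
      · have hs0 : s ≠ 0 := by rintro rfl; rw [mul_zero] at hs; exact hc hs
        have heq : (mordell c).Equation 0 s := mordell_equation.mpr (by rw [hs]; ring)
        have h := mordell_nonsingular hc heq
        refine ⟨Point.some _ _ h, (horder _).mpr ⟨Point.some_ne_zero h, ?_⟩⟩
        rw [mordell_three_smul h]
        exact ⟨hs0, by ring⟩
      · have ht0 : t ≠ 0 := by
          rintro rfl
          rw [mul_zero] at ht
          apply hc
          have : (3:K) * c = 0 := by linear_combination -ht
          simpa using this
        have heq : (mordell c).Equation (-a) t := mordell_equation.mpr (by linear_combination ht.symm + ha)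
        have h := mordell_nonsingular hc heq
        refine ⟨Point.some _ _ h, (horder _).mpr ⟨Point.some_ne_zero h, ?_⟩⟩
        rw [mordell_three_smul h]
        exact ⟨ht0, by linear_combination a * ha⟩
  · rintro ⟨P, hP⟩
    rw [horder] at hP
    obtain ⟨hP0, hP3⟩ := hP
    -- the kernel
    set ker3 := AddMonoidHom.ker (smulAddHom ℤ (mordell c).Point (3 : ℤ)) with hker3
    have hmem : ∀ Q : (mordell c).Point, Q ∈ ker3 ↔ (3:ℤ) • Q = 0 := fun Q => by
      simp [hker3, AddMonoidHom.mem_ker, smulAddHom_apply]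
    -- claim: every element of the kernel is 0, P or -P
    have claim : ∀ Q : (mordell c).Point, (3:ℤ) • Q = 0 → Q = 0 ∨ Q = P ∨ Q = -P := by
      intro Q hQ
      cases Q with
      | zero => exact Or.inl rfl
      | @some x' y' h' =>
        right
        obtain ⟨hy', hx'⟩ := (mordell_three_smul h').mp hQ
        cases P with
        | zero => exact absurd rfl hP0
        | @some x y h =>
          obtain ⟨hy, hx⟩ := (mordell_three_smul h).mp hP3
          have heq : y ^ 2 = x ^ 3 + c := mordell_equation.mp h.1
          have heq' : y' ^ 2 = x' ^ 3 + c := mordell_equation.mp h'.1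
          have hxx : x' = x := by
            rcases mul_eq_zero.mp hx' with h10 | h14 <;> rcases mul_eq_zero.mp hx with h20 | h24
            · rw [h10, h20]
            · exfalso
              apply hns3
              refine ⟨y * y' / c, ?_⟩
              have e1 : y' ^ 2 = c := by rw [h10] at heq'; simpa using heq'
              have e2 : y ^ 2 = -3 * c := by linear_combination heq + h24
              have hyy : (y * y') ^ 2 = -3 * c ^ 2 := by
                linear_combination y' ^ 2 * e2 + (-3 * c) * e1
              field_simp
              linear_combination -hyy
            · exfalso
              apply hns3
              refine ⟨y * y' / c, ?_⟩
              have e1 : y ^ 2 = c := by rw [h20] at heq; simpa using heq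
              have e2 : y' ^ 2 = -3 * c := by linear_combination heq' + h14
              have hyy : (y * y') ^ 2 = -3 * c ^ 2 := by
                linear_combination y ^ 2 * e2 + (-3 * c) * e1
              field_simp
              linear_combination -hyy
            · by_contra hne
              apply hns3
              have hfac : (x' - x) * (x' ^ 2 + x' * x + x ^ 2) = 0 := by
                linear_combination h14 - h24
              have hq : x' ^ 2 + x' * x + x ^ 2 = 0 :=
                (mul_eq_zero.mp hfac).resolve_left (sub_ne_zero.mpr hne)
              have hx0 : x ≠ 0 := by
                rintro rfl
                rw [zero_pow three_ne_zero, zero_add] at h24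
                exact hc (by simpa using h24)
              refine ⟨(2 * x' + x) / x, ?_⟩
              field_simp
              linear_combination -4 * hq
          subst hxx
          have hyy : (y' - y) * (y' + y) = 0 := by linear_combination heq' - heq
          rcases mul_eq_zero.mp hyy with h0 | h0
          · left
            exact some_eq_some_iff.mpr ⟨rfl, by linear_combination h0⟩
          · right
            rw [Point.neg_some, some_eq_some_iff, mordell_negY]
            exact ⟨rfl, by linear_combination h0⟩
    -- build the equivalence
    have hord : addOrderOf P = 3 := (horder P).mpr ⟨hP0, hP3⟩
    let Pk : ker3 := ⟨P, (hmem P).mpr hP3⟩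
    have hg3 : (zmultiplesHom ker3 Pk) ((3:ℕ):ℤ) = 0 := by
      apply Subtype.ext
      rw [zmultiplesHom_apply, AddSubgroupClass.coe_zsmul]
      show ((3:ℕ):ℤ) • P = 0
      exact_mod_cast hP3
    let f : ZMod 3 →+ ker3 := ZMod.lift 3 ⟨zmultiplesHom ker3 Pk, hg3⟩
    have hcoe : ∀ m : ℤ, f (m : ZMod 3) = m • Pk := fun m => by
      show ZMod.lift 3 ⟨zmultiplesHom ker3 Pk, hg3⟩ (m : ZMod 3) = m • Pk
      rw [ZMod.lift_coe, zmultiplesHom_apply]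
    have hinj : Function.Injective f := by
      rw [injective_iff_map_eq_zero]
      intro a ha
      obtain ⟨m, rfl⟩ := ZMod.intCast_surjective a
      rw [hcoe] at ha
      have hm0 : m • P = 0 := by
        have := congrArg (Subtype.val) ha
        rwa [AddSubgroupClass.coe_zsmul] at this
      have hdvd : ((3:ℕ):ℤ) ∣ m := by
        rw [show ((3:ℕ):ℤ) = (addOrderOf P : ℤ) by rw [hord]]
        exact addOrderOf_dvd_iff_zsmul_eq_zero.mpr hm0
      exact (ZMod.intCast_zmod_eq_zero_iff_dvd m 3).mpr hdvd
    have hsurj : Function.Surjective f := by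
      rintro ⟨Q, hQm⟩
      have hQ3 : (3:ℤ) • Q = 0 := (hmem Q).mp hQm
      rcases claim Q hQ3 with h | h | h
      · refine ⟨((0:ℤ) : ZMod 3), Subtype.ext ?_⟩
        subst h
        rw [hcoe, zero_zsmul]
        rfl
      · refine ⟨((1:ℤ) : ZMod 3), Subtype.ext ?_⟩
        subst h
        rw [hcoe, one_zsmul]
      · refine ⟨((-1:ℤ) : ZMod 3), Subtype.ext ?_⟩
        subst h
        rw [hcoe, neg_zsmul, one_zsmul]
        rfl
    exact ⟨(AddEquiv.ofBijective f ⟨hinj, hsurj⟩).symm⟩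
end

section
/- Let K be a cubic number field, c ∈ K nonzero, and E: y^2 = x^3 + c. Then E(K) has no point of order 4. -/
open WeierstrassCurve WeierstrassCurve.Affine Polynomial

/-- A cubic number field contains no square root of 3. -/
lemma no_sqrt3 {K : Type*} [Field K] [NumberField K]
    (hdeg : Module.finrank ℚ K = 3) (t : K) (ht : t ^ 2 = 3) : False := by
  have hint : IsIntegral ℚ t := IsIntegral.of_finite ℚ t
  have hdvd : (minpoly ℚ t).natDegree ∣ 3 := hdeg ▸ minpoly.degree_dvd hint
  have hdvd2 : minpoly ℚ t ∣ (X ^ 2 - C (3 : ℚ)) := by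
    apply minpoly.dvd
    simp [ht]
  have hne : (X ^ 2 - C (3 : ℚ)) ≠ 0 := by
    intro h
    have := congrArg natDegree h
    rw [natDegree_X_pow_sub_C] at this
    simp at this
  have hle : (minpoly ℚ t).natDegree ≤ 2 := by
    have := Polynomial.natDegree_le_of_dvd hdvd2 hne
    rwa [natDegree_X_pow_sub_C] at this
  have hpos : 0 < (minpoly ℚ t).natDegree := minpoly.natDegree_pos hint
  have h13 := (Nat.prime_three.eq_one_or_self_of_dvd _ hdvd)
  have h1 : (minpoly ℚ t).natDegree = 1 := by omega
  obtain ⟨q, hq⟩ := (minpoly.natDegree_eq_one_iff).mp h1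
  have hq3 : (q : ℚ) ^ 2 = 3 := by
    have : (algebraMap ℚ K) (q ^ 2) = (algebraMap ℚ K) 3 := by
      rw [map_pow, hq, ht, map_ofNat]
    exact_mod_cast (algebraMap ℚ K).injective this
  have h3 : IsSquare (3 : ℚ) := ⟨q, by rw [← hq3]; ring⟩
  rw [show ((3 : ℚ)) = ((3 : ℕ) : ℚ) by norm_num, Rat.isSquare_natCast_iff] at h3
  exact (Nat.prime_three.prime.not_isSquare) h3

open scoped Classical in
theorem stmt_6 (K : Type*) [Field K] [NumberField K]
    (hdeg : Module.finrank ℚ K = 3) (c : K) (hc : c ≠ 0) :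
    ∀ P : (mordell c).Point, addOrderOf P ≠ 4 := by
  intro P hP
  have h4 : (4 : ℕ) • P = 0 := hP ▸ addOrderOf_nsmul_eq_zero P
  have h2 : P + P ≠ 0 := by
    intro h
    have hd : addOrderOf P ∣ 2 := addOrderOf_dvd_of_nsmul_eq_zero (by rw [two_nsmul]; exact h)
    rw [hP] at hd
    omega
  have h4' : (P + P) + (P + P) = 0 := by
    rw [show (P + P) + (P + P) = (4 : ℕ) • P by
      rw [← two_nsmul, ← two_nsmul, ← mul_nsmul]]
    exact h4
  rcases P with _ | @⟨x, y, h⟩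
  · rw [← Point.zero_def, addOrderOf_zero] at hP
    exact absurd hP (by norm_num)
  have hneg : ∀ a b : K, (mordell c).negY a b = -b := by
    intro a b
    simp [WeierstrassCurve.Affine.negY, mordell]
  have hy : y ≠ (mordell c).negY x y := by
    intro hE
    exact h2 (WeierstrassCurve.Affine.Point.add_self_of_Y_eq hE)
  have hy0 : y ≠ 0 := by
    intro h0
    exact hy (by rw [hneg, h0, neg_zero])
  have heq : y ^ 2 = x ^ 3 + c := by
    have := ((mordell c).equation_iff x y).mp h.1
    simpa [mordell] using this
  set L : K := (mordell c).slope x x y y with hLdef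
  have hPP : (Point.some _ _ h) + (Point.some _ _ h)
      = Point.some _ _ (WeierstrassCurve.Affine.nonsingular_add h h fun hxy => hy hxy.right) :=
    WeierstrassCurve.Affine.Point.add_self_of_Y_ne hy
  rw [hPP] at h4'
  have hy2 : (mordell c).addY x x y L = 0 := by
    by_cases hc2 : (mordell c).addY x x y L
        = (mordell c).negY ((mordell c).addX x x L) ((mordell c).addY x x y L)
    · rw [hneg] at hc2
      have h2ne : (2 : K) ≠ 0 := two_ne_zero
      apply mul_left_cancel₀ h2ne
      linear_combination hc2
    · rw [WeierstrassCurve.Affine.Point.add_self_of_Y_ne hc2] at h4'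
      exact absurd h4' (by simp [← WeierstrassCurve.Affine.Point.zero_def])
  have hL : L = 3 * x ^ 2 / (2 * y) := by
    rw [hLdef, WeierstrassCurve.Affine.slope_of_Y_ne rfl hy, hneg]
    simp [mordell]
    ring_nf
  have hLy : 2 * y * L = 3 * x ^ 2 := by
    rw [hL]
    field_simp
  have hy2' : L ^ 3 - 3 * L * x + y = 0 := by
    have := hy2
    simp only [WeierstrassCurve.Affine.addY, WeierstrassCurve.Affine.negAddY,
      WeierstrassCurve.Affine.addX, hneg] at this
    have ha1 : (mordell c).a₁ = 0 := rfl
    have ha2 : (mordell c).a₂ = 0 := rfl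
    rw [ha1, ha2] at this
    linear_combination -this
  have hsex : x ^ 6 + 20 * c * x ^ 3 - 8 * c ^ 2 = 0 := by
    have key : 27 * x ^ 6 - 36 * x ^ 3 * y ^ 2 + 8 * y ^ 4 = 0 := by
      linear_combination 8 * y ^ 3 * hy2'
        + (-(2 * y * L) ^ 2 - 3 * x ^ 2 * (2 * y * L) - 9 * x ^ 4 + 12 * x * y ^ 2) * hLy
    linear_combination -key + (8 * y ^ 2 + 8 * x ^ 3 + 8 * c - 36 * x ^ 3) * heq
  refine no_sqrt3 hdeg ((x ^ 3 + 10 * c) / (6 * c)) ?_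
  have h6c : (6 : K) * c ≠ 0 := by simp [hc]
  field_simp
  linear_combination hsex
end

section
/- The polynomial X^9 − 9X^8 + 24X^6 + 18X^5 + 3X^3 − 9X^2 − 1 is irreducible over ℚ. -/
/-!
By Gauss's lemma it suffices to show that the monic integer polynomial `f` is irreducible over `ℤ`,
i.e. that it has no monic factor `q` of degree `1 ≤ d ≤ 4`. Such a `q` would satisfy
`q(n) ∣ f(n)` for `n = -2, …, 3`, where `f` takes the values `-1917, -17, -1, 27, 307, -17497`,
while its `d`-th forward difference is the constant `d!`. The divisor conditions leave finitely
many candidate value tables and none of them has constant `d`-th difference `d!`.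
-/

open Polynomial Finset Nat

noncomputable def mordellPoly : ℤ[X] :=
  X ^ 9 - 9 * X ^ 8 + 24 * X ^ 6 + 18 * X ^ 5 + 3 * X ^ 3 - 9 * X ^ 2 - 1

lemma mordellPoly_monic : mordellPoly.Monic := by
  unfold mordellPoly; monicity!

lemma mordellPoly_natDegree : mordellPoly.natDegree = 9 := by
  unfold mordellPoly; compute_degree!

theorem fwdDiff_iter_ne_factorial_of_dvd_eval_mordellPoly {d : ℕ} (hd : d ∈ Ioc 0 4)
    {v : ℤ → ℤ} (hdvd : ∀ n, v n ∣ mordellPoly.eval n) : (fwdDiff 1)^[d] v ≠ (d ! : ℤ → ℤ) := by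
  intro hΔ
  have hsum (x : ℤ) := (fwdDiff_iter_eq_sum_shift (h := 1) v d x).symm.trans (congrFun hΔ x)
  have hval (n k : ℤ) (hk : mordellPoly.eval n = k) (hk0 : k ≠ 0) :
      (v n).natAbs ∈ k.natAbs.divisors :=
    Int.mem_divisors_iff_natAbs_mem_divisors_natAbs.1 (Int.mem_divisors.2 ⟨hk ▸ hdvd n, hk0⟩)
  have hvm2 := hval (-2) (-1917) (by norm_num [mordellPoly]) (by norm_num)
  have hvm1 := hval (-1) (-17) (by norm_num [mordellPoly]) (by norm_num)
  have hv0 := hval 0 (-1) (by norm_num [mordellPoly]) (by norm_num)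
  have hv1 := hval 1 27 (by norm_num [mordellPoly]) (by norm_num)
  have hv2 := hval 2 307 (by norm_num [mordellPoly]) (by norm_num)
  have hv3 := hval 3 (-17497) (by norm_num [mordellPoly]) (by norm_num)
  simp only [Int.reduceNeg, Int.natAbs_neg, Int.reduceAbs, Nat.divisors_ofNat, mem_insert,
    mem_singleton, Int.natAbs_eq_iff, Nat.cast_ofNat, Nat.cast_one] at hvm2 hvm1 hv0 hv1 hv2 hv3
  have hwm2 := hsum (-2)
  have hwm1 := hsum (-1)
  have hw0 := hsum 0
  have hw1 := hsum 1
  have hw2 := hsum 2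
  clear hsum hΔ hval hdvd
  obtain ⟨hd0, hd4⟩ := mem_Ioc.1 hd
  interval_cases d <;> norm_num [sum_range_succ, Nat.choose_two_right] at hwm2 hwm1 hw0 hw1 hw2 <;>
    generalize v (-2) = a at * <;>
    generalize v (-1) = b at * <;>
    generalize v 0 = c at * <;>
    generalize v 1 = e at * <;>
    generalize v 2 = f at * <;>
    generalize v 3 = g at *
  -- only the windows inside `[-2, 3]` matter; the others would just slow `omega` down
  · omega
  · clear hw2; omega
  · clear hw1 hw2; omega
  · clear hw0 hw1 hw2; omega

theorem mordellPoly_irreducible : Irreducible mordellPoly := by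
  have hne : mordellPoly ≠ 1 := fun h => by
    simpa [h] using mordellPoly_natDegree
  refine (mordellPoly_monic.irreducible_iff_lt_natDegree_lt hne).2 fun q hq hdeg hdvd => ?_
  rw [mordellPoly_natDegree] at hdeg
  exact fwdDiff_iter_ne_factorial_of_dvd_eval_mordellPoly hdeg (fun n => eval_dvd hdvd)
    (by simpa [hq.leadingCoeff] using q.fwdDiff_iter_degree_eq_factorial)

theorem stmt_8 :
    Irreducible (X ^ 9 - 9 * X ^ 8 + 24 * X ^ 6 + 18 * X ^ 5 + 3 * X ^ 3 - 9 * X ^ 2 - 1 :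
      ℚ[X]) := by
  have hmap : mordellPoly.map (Int.castRingHom ℚ) =
      X ^ 9 - 9 * X ^ 8 + 24 * X ^ 6 + 18 * X ^ 5 + 3 * X ^ 3 - 9 * X ^ 2 - 1 := by
    simp [mordellPoly]
  rw [← hmap]
  exact (IsPrimitive.Int.irreducible_iff_irreducible_map_cast mordellPoly_monic.isPrimitive).1
    mordellPoly_irreducible
end

section
/- The polynomial t^9 − 96t^6 + 48t^3 + 64 is irreducible over ℚ, and t^{12} − 95t^9 − 48t^6 + 112t^3 + 64 factors as (t^3 + 1)(t^9 − 96t^6 + 48t^3 + 64). -/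
open Polynomial

/-- First coordinate of `(u + v·β + w·β²)³` in the basis `1, β, β²`,
where `β³ = 24β² - 3β - 1`. -/
def e0aux {R : Type*} [CommRing R] (u v w : R) : R :=
  u^3 - v^3 - 6*u*v*w - 72*u*w^2 - 72*v^2*w - 1719*v*w^2 - 13679*w^3

def e1aux {R : Type*} [CommRing R] (u v w : R) : R :=
  3*u^2*v - 3*v^3 - 18*u*v*w - 219*u*w^2 - 219*v^2*w - 5229*v*w^2 - 41610*w^3

def e2aux {R : Type*} [CommRing R] (u v w : R) : R :=
  3*u*v^2 + 3*u^2*w + 24*v^3 + 144*u*v*w + 1719*u*w^2 + 1719*v^2*w + 41037*v*w^2 + 326553*w^3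

lemma mod2aux : ∀ u v w : ZMod 2,
    e0aux u v w = 0 → e1aux u v w = 0 → e2aux u v w = 0 → u = 0 ∧ v = 0 ∧ w = 0 := by
  decide

lemma descent_aux : ∀ (k : ℕ) (n x y z : ℤ), n.natAbs ≤ k → n ≠ 0 →
    e0aux x y z = 0 → e1aux x y z = 4 * n ^ 3 → e2aux x y z = 0 → False := by
  intro k
  induction k with
  | zero => intro n x y z hle hn _ _ _; omega
  | succ k ih =>
    intro n x y z hle hn h0 h1 h2
    have c0 : e0aux (x : ZMod 2) (y : ZMod 2) (z : ZMod 2) = 0 := by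
      have := congrArg (fun t : ℤ => (t : ZMod 2)) h0
      simp only [e0aux] at this ⊢
      push_cast at this
      simpa using this
    have c1 : e1aux (x : ZMod 2) (y : ZMod 2) (z : ZMod 2) = 0 := by
      have := congrArg (fun t : ℤ => (t : ZMod 2)) h1
      simp only [e1aux] at this ⊢
      push_cast at this
      rw [show ((4 : ZMod 2)) = 0 from rfl, zero_mul] at this
      simpa using this
    have c2 : e2aux (x : ZMod 2) (y : ZMod 2) (z : ZMod 2) = 0 := by
      have := congrArg (fun t : ℤ => (t : ZMod 2)) h2
      simp only [e2aux] at this ⊢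
      push_cast at this
      simpa using this
    obtain ⟨hx0, hy0, hz0⟩ := mod2aux _ _ _ c0 c1 c2
    obtain ⟨a, rfl⟩ : (2:ℤ) ∣ x := (ZMod.intCast_zmod_eq_zero_iff_dvd x 2).mp hx0
    obtain ⟨b, rfl⟩ : (2:ℤ) ∣ y := (ZMod.intCast_zmod_eq_zero_iff_dvd y 2).mp hy0
    obtain ⟨c, rfl⟩ : (2:ℤ) ∣ z := (ZMod.intCast_zmod_eq_zero_iff_dvd z 2).mp hz0
    have h0' : 8 * e0aux a b c = 0 := by
      rw [← h0]; simp only [e0aux]; ring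
    have h1' : 8 * e1aux a b c = 4 * n ^ 3 := by
      rw [← h1]; simp only [e1aux]; ring
    have h2' : 8 * e2aux a b c = 0 := by
      rw [← h2]; simp only [e2aux]; ring
    have hn2 : (2:ℤ) ∣ n := by
      have : (2:ℤ) ∣ n ^ 3 := ⟨e1aux a b c, by linarith⟩
      exact Int.Prime.dvd_pow' Nat.prime_two this
    obtain ⟨m, rfl⟩ := hn2
    have hm : m ≠ 0 := by rintro rfl; simp at hn
    refine ih m a b c ?_ hm (by linarith) (by nlinarith [h1']) (by linarith)
    have : (2*m).natAbs = 2 * m.natAbs := by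
      simp [Int.natAbs_mul]
    omega

lemma ratstep_aux (u v w : ℚ) (h0 : e0aux u v w = 0) (h1 : e1aux u v w = 4)
    (h2 : e2aux u v w = 0) : False := by
  have hdu : ((u.den : ℚ)) ≠ 0 := by exact_mod_cast u.den_nz
  have hdv : ((v.den : ℚ)) ≠ 0 := by exact_mod_cast v.den_nz
  have hdw : ((w.den : ℚ)) ≠ 0 := by exact_mod_cast w.den_nz
  have hu : (u.num : ℚ) = u * (u.den : ℚ) := by
    rw [Rat.mul_den_eq_num]
  have hv : (v.num : ℚ) = v * (v.den : ℚ) := by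
    rw [Rat.mul_den_eq_num]
  have hw : (w.num : ℚ) = w * (w.den : ℚ) := by
    rw [Rat.mul_den_eq_num]
  set n : ℤ := (u.den : ℤ) * (v.den : ℤ) * (w.den : ℤ) with hn_def
  have hnQ : (n : ℚ) = (u.den : ℚ) * (v.den : ℚ) * (w.den : ℚ) := by push_cast [hn_def]; ring
  have hn : n ≠ 0 := by
    rw [hn_def]
    positivity
  obtain ⟨x, hx⟩ : ∃ x : ℤ, (x : ℚ) = u * n :=
    ⟨u.num * v.den * w.den, by push_cast [hnQ]; rw [hu]; ring⟩
  obtain ⟨y, hy⟩ : ∃ y : ℤ, (y : ℚ) = v * n :=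
    ⟨v.num * u.den * w.den, by push_cast [hnQ]; rw [hv]; ring⟩
  obtain ⟨z, hz⟩ : ∃ z : ℤ, (z : ℚ) = w * n :=
    ⟨w.num * u.den * v.den, by push_cast [hnQ]; rw [hw]; ring⟩
  have h0' : e0aux x y z = 0 := by
    have : ((e0aux x y z : ℤ) : ℚ) = 0 := by
      simp only [e0aux]; push_cast; rw [hx, hy, hz]
      simp only [e0aux] at h0
      linear_combination ((n:ℚ))^3 * h0
    exact_mod_cast this
  have h1' : e1aux x y z = 4 * n ^ 3 := by
    have : ((e1aux x y z : ℤ) : ℚ) = 4 * (n:ℚ)^3 := by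
      simp only [e1aux]; push_cast; rw [hx, hy, hz]
      simp only [e1aux] at h1
      linear_combination ((n:ℚ))^3 * h1
    exact_mod_cast this
  have h2' : e2aux x y z = 0 := by
    have : ((e2aux x y z : ℤ) : ℚ) = 0 := by
      simp only [e2aux]; push_cast; rw [hx, hy, hz]
      simp only [e2aux] at h2
      linear_combination ((n:ℚ))^3 * h2
    exact_mod_cast this
  exact descent_aux n.natAbs n x y z le_rfl hn h0' h1' h2'

lemma norational_aux (a : ℚ) : a^3 - 96*a^2 + 48*a + 64 ≠ 0 := by
  intro ha
  have hint : IsIntegral ℤ a := by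
    refine ⟨X^3 - 96*X^2 + 48*X + 64, by monicity!, ?_⟩
    simp only [eval₂_eq_eval_map, Polynomial.map_add, Polynomial.map_sub, Polynomial.map_pow,
      Polynomial.map_mul, Polynomial.map_X, Polynomial.map_ofNat, eval_add, eval_sub, eval_pow,
      eval_mul, eval_X, eval_ofNat]
    linear_combination ha
  obtain ⟨m, hm⟩ := IsIntegrallyClosed.isIntegral_iff.mp hint
  rw [eq_intCast] at hm
  subst hm
  have hz : m^3 - 96*m^2 + 48*m + 64 = 0 := by exact_mod_cast ha
  have h5 : ((m : ZMod 5))^3 - 96*(m : ZMod 5)^2 + 48*(m : ZMod 5) + 64 = 0 := by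
    have := congrArg (fun t : ℤ => (t : ZMod 5)) hz
    push_cast at this
    simpa using this
  have : ∀ t : ZMod 5, t^3 - 96*t^2 + 48*t + 64 ≠ 0 := by decide
  exact this _ h5

lemma cubic_irr_aux : Irreducible (X^3 - 96*X^2 + 48*X + 64 : ℚ[X]) := by
  have hdeg : (X^3 - 96*X^2 + 48*X + 64 : ℚ[X]).natDegree = 3 := by compute_degree!
  rw [irreducible_iff_roots_eq_zero_of_degree_le_three (by omega) (by omega)]
  rw [Multiset.eq_zero_iff_forall_notMem]
  intro a ha
  rw [mem_roots'] at ha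
  apply norational_aux a
  have := ha.2
  simp only [IsRoot, eval_add, eval_sub, eval_pow, eval_mul, eval_X, eval_ofNat] at this
  linarith [this]


lemma cube_ne_aux {L : Type} [Field L] [CharZero L] (α : L)
    (hα : α^3 - 96*α^2 + 48*α + 64 = 0)
    (hli : ∀ A B C : ℚ, (A:L) + (B:L)*α + (C:L)*α^2 = 0 → A = 0 ∧ B = 0 ∧ C = 0)
    (hspan : ∀ c : L, ∃ u v w : ℚ, c = (u:L) + (v:L)*α + (w:L)*α^2)
    (b : L) : b ^ 3 ≠ α := by
  intro hb
  obtain ⟨u, v, w, hbrep⟩ := hspan b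
  rw [hbrep] at hb
  have key := hli (16 * e0aux u (4*v) (16*w)) (4 * e1aux u (4*v) (16*w) - 16)
      (e2aux u (4*v) (16*w)) ?_
  · exact ratstep_aux u (4*v) (16*w) (by linarith [key.1]) (by linarith [key.2.1]) key.2.2
  · simp only [e0aux, e1aux, e2aux]
    push_cast
    linear_combination 16 * hb - (16 * ((w:L)^3*α^3
      + (96*(w:L)^3 + 3*(v:L)*(w:L)^2)*α^2
      + (9168*(w:L)^3 + 288*(v:L)*(w:L)^2 + 3*(v:L)^2*(w:L) + 3*(u:L)*(w:L)^2)*α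
      + (875456*(w:L)^3 + 27504*(v:L)*(w:L)^2 + 288*(v:L)^2*(w:L) + (v:L)^3
        + 288*(u:L)*(w:L)^2 + 6*(u:L)*(v:L)*(w:L)))) * hα

open IntermediateField in
theorem nine_irr_aux : Irreducible (X ^ 9 - 96 * X ^ 6 + 48 * X ^ 3 + 64 : ℚ[X]) := by
  have hqm : (X^3 - 96*X^2 + 48*X + 64 : ℚ[X]).Monic := by monicity!
  have hqne : (X^3 - 96*X^2 + 48*X + 64 : ℚ[X]) ≠ 0 := hqm.ne_zero
  have hdq : (X^3 - 96*X^2 + 48*X + 64 : ℚ[X]).degree = 3 := by compute_degree!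
  have hcomp : (X^3 - 96*X^2 + 48*X + 64 : ℚ[X]).comp (X^3) =
      X ^ 9 - 96 * X ^ 6 + 48 * X ^ 3 + 64 := by
    simp only [add_comp, sub_comp, mul_comp, pow_comp, X_comp, ofNat_comp]
    ring
  rw [← hcomp]
  refine Polynomial.irreducible_comp hqm (monic_X_pow 3) cubic_irr_aux ?_
  intro E _ _ x hx
  rw [Polynomial.map_pow, Polynomial.map_X]
  apply X_pow_sub_C_irreducible_of_prime Nat.prime_three
  intro b hb
  letI : Algebra ℚ (↥ℚ⟮x⟯) := ℚ⟮x⟯.algebra'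
  have hchar : CharZero (↥ℚ⟮x⟯) := charZero_of_injective_algebraMap
    (algebraMap ℚ (↥ℚ⟮x⟯)).injective
  have hmin' : minpoly ℚ (AdjoinSimple.gen ℚ x) = X^3 - 96*X^2 + 48*X + 64 := by
    exact hx ▸ IntermediateField.minpoly_gen ℚ x
  have hα : (AdjoinSimple.gen ℚ x)^3 - 96*(AdjoinSimple.gen ℚ x)^2
      + 48*(AdjoinSimple.gen ℚ x) + 64 = 0 := by
    have h := minpoly.aeval ℚ (AdjoinSimple.gen ℚ x)
    rw [hmin'] at h
    simpa only [map_add, map_sub, map_mul, map_pow, aeval_X, map_ofNat] using h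
  refine cube_ne_aux _ hα ?_ ?_ b hb
  · -- linear independence
    intro A B C h
    have hg : aeval (AdjoinSimple.gen ℚ x)
        (Polynomial.C A + Polynomial.C B * X + Polynomial.C C * X^2) = 0 := by
      simp only [map_add, map_mul, aeval_C, aeval_X, map_pow]
      rw [eq_ratCast, eq_ratCast, eq_ratCast]
      exact h
    rcases eq_or_ne (Polynomial.C A + Polynomial.C B * X + Polynomial.C C * X^2) 0 with h0 | h0
    · refine ⟨?_, ?_, ?_⟩
      · have := congrArg (fun p => Polynomial.coeff p 0) h0
        simpa using this
      · have := congrArg (fun p => Polynomial.coeff p 1) h0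
        simpa using this
      · have := congrArg (fun p => Polynomial.coeff p 2) h0
        simpa using this
    · exfalso
      have hle := minpoly.degree_le_of_ne_zero ℚ (AdjoinSimple.gen ℚ x) h0 hg
      rw [hmin', hdq] at hle
      have hd2 : (Polynomial.C A + Polynomial.C B * X + Polynomial.C C * X^2).degree ≤ 2 := by
        compute_degree
      have := hle.trans hd2
      norm_num at this
  · -- span
    intro c
    have hint : IsIntegral ℚ x := by
      by_contra hni
      exact hqne (hx ▸ minpoly.eq_zero hni)
    obtain ⟨f, hf⟩ := (IntermediateField.adjoin.powerBasis hint).exists_eq_aeval' c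
    rw [IntermediateField.adjoin.powerBasis_gen] at hf
    have haq' := IntermediateField.aeval_gen_minpoly ℚ x
    rw [hx] at haq'
    rw [← modByMonic_add_div f (X^3 - 96*X^2 + 48*X + 64 : ℚ[X]), map_add, map_mul, haq', zero_mul, add_zero] at hf
    have hdeg3 : (f %ₘ (X^3 - 96*X^2 + 48*X + 64 : ℚ[X])).natDegree < 3 := by
      rcases eq_or_ne (f %ₘ (X^3 - 96*X^2 + 48*X + 64 : ℚ[X])) 0 with h0 | h0
      · simp [h0]
      · have hlt := degree_modByMonic_lt f hqm
        rw [hdq] at hlt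
        exact (natDegree_lt_iff_degree_lt h0).mpr (by exact_mod_cast hlt)
    rw [aeval_eq_sum_range' hdeg3] at hf
    rw [Finset.sum_range_succ, Finset.sum_range_succ, Finset.sum_range_one] at hf
    rw [Algebra.smul_def, Algebra.smul_def, Algebra.smul_def, pow_zero, mul_one, pow_one] at hf
    rw [eq_ratCast, eq_ratCast, eq_ratCast] at hf
    exact ⟨_, _, _, hf⟩

theorem stmt_13 :
    Irreducible (X ^ 9 - 96 * X ^ 6 + 48 * X ^ 3 + 64 : ℚ[X]) ∧
    (X ^ 12 - 95 * X ^ 9 - 48 * X ^ 6 + 112 * X ^ 3 + 64 : ℚ[X]) =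
      (X ^ 3 + 1) * (X ^ 9 - 96 * X ^ 6 + 48 * X ^ 3 + 64) := by
  exact ⟨nine_irr_aux, by ring⟩
end

section
/- Let K be a sextic number field, c ∈ K nonzero, E: y^2 = x^3 + c, and suppose E(K) contains 8 points of order 3 (full 3-torsion) and a point of order 2. Then E(K)[2] ≅ ℤ/2ℤ ⊕ ℤ/2ℤ; in particular the group ℤ/3ℤ ⊕ ℤ/6ℤ does not occur as E(K)_tors for a Mordell curve over a sextic field. -/
open WeierstrassCurve WeierstrassCurve.Affine Polynomial

open Classical

set_option linter.unusedSectionVars false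
namespace MordellAux

variable {K : Type} [Field K] [CharZero K] {c : K}

lemma add_eq_zero' {W : WeierstrassCurve.Affine K} (P Q : W.Point) : P + Q = 0 ↔ P = -Q := by
  rcases P, Q with ⟨_ | @⟨x₁, y₁, _⟩, _ | @⟨x₂, y₂, _⟩⟩
  any_goals rfl
  · rw [← Point.zero_def, zero_add, ← neg_eq_iff_eq_neg, neg_zero, eq_comm]
  · rw [Point.neg_some, Point.some.injEq]
    constructor
    · contrapose!
      intro h
      rw [Point.add_some (fun hxy => h hxy.1 hxy.2)]
      exact Point.some_ne_zero _
    · exact fun ⟨hx, hy⟩ ↦ Point.add_of_Y_eq hx hy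

lemma mordell_equation {x y : K} :
    (mordell c).Equation x y ↔ y ^ 2 = x ^ 3 + c := by
  rw [WeierstrassCurve.Affine.equation_iff]
  simp [mordell]

lemma mordell_negY (x y : K) : (mordell c).negY x y = -y := by
  simp [mordell, WeierstrassCurve.Affine.negY]

lemma mordell_nonsingular {x : K} (hc : c ≠ 0) (hx : x ^ 3 = -c) :
    (mordell c).Nonsingular x 0 := by
  rw [WeierstrassCurve.Affine.nonsingular_iff]
  refine ⟨mordell_equation.mpr (by rw [hx]; ring), Or.inl ?_⟩
  have hx0 : x ≠ 0 := fun h => hc (by simpa [h] using hx.symm)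
  simp only [mordell]
  norm_num
  exact hx0

end MordellAux

namespace MordellAux

variable {K : Type} [Field K] [CharZero K] {c : K}

lemma two_smul_eq_zero_iff (P : (mordell c).Point) : (2 : ℤ) • P = 0 ↔ P = -P := by
  rw [two_zsmul, add_eq_zero']

lemma some_eq_neg_iff {x y : K} (h : (mordell c).Nonsingular x y) :
    Point.some _ _ h = -Point.some _ _ h ↔ y = 0 := by
  rw [Point.neg_some, Point.some.injEq]
  constructor
  · rintro ⟨-, hy⟩
    rw [mordell_negY] at hy
    have h2 : (2 : K) * y = 0 := by linear_combination hy
    simpa using h2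
  · rintro rfl
    exact ⟨rfl, by rw [mordell_negY, neg_zero]⟩

lemma order_three_coords {P : (mordell c).Point} (hP : addOrderOf P = 3) :
    ∃ x y : K, ∃ h : (mordell c).Nonsingular x y, P = Point.some _ _ h ∧ y ≠ 0 ∧
      y ^ 2 = x ^ 3 + c ∧ x * (x ^ 3 + 4 * c) = 0 := by
  have h3 : (3 : ℕ) • P = 0 := by rw [← hP]; exact addOrderOf_nsmul_eq_zero P
  have h3' : P + P + P = 0 := by
    rw [show (3 : ℕ) • P = P + P + P by rw [succ_nsmul, two_nsmul]] at h3
    exact h3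
  cases P with
  | zero => rw [← Point.zero_def] at hP; rw [addOrderOf_zero] at hP; exact absurd hP (by norm_num)
  | @some x y h =>
    have heq : y ^ 2 = x ^ 3 + c := mordell_equation.mp h.1
    have hy : y ≠ 0 := by
      rintro rfl
      have hdd : Point.some _ _ h + Point.some _ _ h = 0 :=
        Point.add_self_of_Y_eq (by rw [mordell_negY, neg_zero])
      rw [hdd, zero_add] at h3'
      exact Point.some_ne_zero h h3'
    have hyneg : y ≠ (mordell c).negY x y := by
      rw [mordell_negY]
      intro hcon
      exact hy (by simpa using (by linear_combination hcon : (2 : K) * y = 0))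
    have hdd := Point.add_self_of_Y_ne (h₁ := h) hyneg
    rw [hdd, add_eq_zero', Point.neg_some, Point.some.injEq] at h3'
    obtain ⟨hx, -⟩ := h3'
    refine ⟨x, y, h, rfl, hy, heq, ?_⟩
    rw [WeierstrassCurve.Affine.addX, WeierstrassCurve.Affine.slope_of_Y_ne rfl hyneg,
      mordell_negY] at hx
    simp only [mordell] at hx
    have h2y : y + y ≠ 0 := by intro h0; exact hy (by linear_combination h0 / 2)
    have hx' : (3 * x ^ 2) ^ 2 / ((y + y) ^ 2) = 3 * x := by linear_combination hx
    rw [div_eq_iff (pow_ne_zero 2 h2y)] at hx'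
    linear_combination (-1 / 3 : K) * hx' - 4 * x * heq

end MordellAux

namespace MordellAux

variable {K : Type} [Field K] [CharZero K] {c : K}

lemma sign_eq {u y1 y2 : K} (h1 : y1 ^ 2 = u ^ 2) (h2 : y2 ^ 2 = u ^ 2) (hu : u ≠ 0)
    (hflag : (y1 = u) = (y2 = u)) : y1 = y2 := by
  have hne : -u ≠ u := fun h => hu (by linear_combination -h / 2)
  have e1 : y1 = u ∨ y1 = -u := by
    have h0 : (y1 - u) * (y1 + u) = 0 := by linear_combination h1
    rcases mul_eq_zero.mp h0 with h | h
    · exact Or.inl (by linear_combination h)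
    · exact Or.inr (by linear_combination h)
  have e2 : y2 = u ∨ y2 = -u := by
    have h0 : (y2 - u) * (y2 + u) = 0 := by linear_combination h2
    rcases mul_eq_zero.mp h0 with h | h
    · exact Or.inl (by linear_combination h)
    · exact Or.inr (by linear_combination h)
  rcases e1 with e1 | e1
  · rw [e1, ← (iff_of_eq hflag).mp e1]
  · rcases e2 with e2 | e2
    · exact absurd ((iff_of_eq hflag).mpr e2) (by rw [e1]; exact hne)
    · rw [e1, e2]

open Classical in
/-- Coordinate-flag map used for the counting argument. -/
noncomputable def flags (c : K) (s t : K) : (mordell c).Point → Prop × Prop := fun P =>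
  match P with
  | .zero => (True, True)
  | @Point.some _ _ _ x y _ => (x = 0, y = if x = 0 then s else t)

lemma exists_omega (hc : c ≠ 0)
    (h8 : Nat.card {P : (mordell c).Point | addOrderOf P = 3} = 8) :
    ∃ ω : K, ω ^ 3 = 1 ∧ ω ≠ 1 := by
  by_contra hω
  push_neg at hω
  have H : ∀ a b : K, a ^ 3 = -(4 * c) → b ^ 3 = -(4 * c) → a = b := by
    intro a b ha hb
    have hb0 : b ≠ 0 := by
      rintro rfl
      rw [zero_pow (by norm_num)] at hb
      exact hc (by linear_combination hb / 4)
    have hdiv : (a / b) ^ 3 = 1 := by rw [div_pow, ha, hb, div_self (by rw [← hb]; exact pow_ne_zero 3 hb0)]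
    have := hω _ hdiv
    field_simp at this
    exact this
  classical
  set s : K := if hs : ∃ y : K, y ^ 2 = c then hs.choose else 0 with hs_def
  set t : K := if ht : ∃ y : K, y ^ 2 = -(3 * c) then ht.choose else 0 with ht_def
  have hinj : Function.Injective
      (fun P : {P : (mordell c).Point | addOrderOf P = 3} => flags c s t P.val) := by
    rintro ⟨P, hP⟩ ⟨Q, hQ⟩ hg
    simp only [Set.mem_setOf_eq] at hP hQ
    obtain ⟨x1, y1, h1, rfl, hy1, heq1, hroot1⟩ := order_three_coords hP
    obtain ⟨x2, y2, h2, rfl, hy2, heq2, hroot2⟩ := order_three_coords hQ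
    simp only [flags, Prod.mk.injEq] at hg
    obtain ⟨hfst, hsnd⟩ := hg
    by_cases hx1 : x1 = 0
    · have hx2 : x2 = 0 := (iff_of_eq hfst).mp hx1
      subst hx1; subst hx2
      rw [if_pos rfl] at hsnd
      have hsex : ∃ y : K, y ^ 2 = c := ⟨y1, by simpa using heq1⟩
      have hs2 : s ^ 2 = c := by rw [hs_def, dif_pos hsex]; exact hsex.choose_spec
      have hs0 : s ≠ 0 := fun h => hc (by rw [← hs2, h]; ring)
      have : y1 = y2 := sign_eq (by rw [hs2]; simpa using heq1) (by rw [hs2]; simpa using heq2) hs0 hsnd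
      subst this
      rfl
    · have hx2 : x2 ≠ 0 := fun h => hx1 ((iff_of_eq hfst).mpr h)
      have hr1 : x1 ^ 3 = -(4 * c) := by
        rcases mul_eq_zero.mp hroot1 with h | h
        · exact absurd h hx1
        · linear_combination h
      have hr2 : x2 ^ 3 = -(4 * c) := by
        rcases mul_eq_zero.mp hroot2 with h | h
        · exact absurd h hx2
        · linear_combination h
      have hxx : x1 = x2 := H _ _ hr1 hr2
      subst hxx
      rw [if_neg hx1] at hsnd
      have htex : ∃ y : K, y ^ 2 = -(3 * c) := ⟨y1, by rw [heq1, hr1]; ring⟩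
      have ht2 : t ^ 2 = -(3 * c) := by rw [ht_def, dif_pos htex]; exact htex.choose_spec
      have ht0 : t ≠ 0 := fun h => hc (by
        have := ht2
        rw [h] at this
        linear_combination this / 3)
      have : y1 = y2 := sign_eq (by rw [ht2, heq1, hr1]; ring) (by rw [ht2, heq2, hr1]; ring) ht0 hsnd
      subst this
      rfl
  have hle := Nat.card_le_card_of_injective _ hinj
  rw [h8] at hle
  have : Nat.card (Prop × Prop) = 4 := by
    rw [Nat.card_eq_fintype_card]
    simp
  omega

end MordellAux

namespace MordellAux

variable {K : Type} [Field K] [CharZero K] {c : K}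

lemma exists_cube_root (hP2 : ∃ P : (mordell c).Point, addOrderOf P = 2) :
    ∃ x0 : K, x0 ^ 3 = -c := by
  obtain ⟨P, hP⟩ := hP2
  have h2 : (2 : ℕ) • P = 0 := by rw [← hP]; exact addOrderOf_nsmul_eq_zero P
  rw [two_nsmul, add_eq_zero'] at h2
  cases P with
  | zero => rw [← Point.zero_def, addOrderOf_zero] at hP; exact absurd hP (by norm_num)
  | @some x y h =>
    rw [some_eq_neg_iff] at h2
    subst h2
    have heq : (0 : K) ^ 2 = x ^ 3 + c := mordell_equation.mp h.1
    exact ⟨x, by linear_combination -heq⟩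

/-- membership in the 2-torsion kernel, for a `some` point, means `y = 0`. -/
lemma mem_ker_iff (P : (mordell c).Point) :
    P ∈ AddMonoidHom.ker (smulAddHom ℤ (mordell c).Point (2 : ℤ)) ↔ (2 : ℤ) • P = 0 := by
  rfl

end MordellAux

namespace MordellAux

variable {K : Type} [Field K] [CharZero K] {c : K}

lemma ker_equiv_of (hc : c ≠ 0) (hω : ∃ ω : K, ω ^ 3 = 1 ∧ ω ≠ 1)
    (hx0 : ∃ x0 : K, x0 ^ 3 = -c) :
    Nonempty ((AddMonoidHom.ker (smulAddHom ℤ (mordell c).Point (2 : ℤ))) ≃+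
      (ZMod 2 × ZMod 2)) := by
  classical
  obtain ⟨ω, hω3, hω1⟩ := hω
  obtain ⟨x0, hx03⟩ := hx0
  have hx00 : x0 ≠ 0 := by rintro rfl; exact hc (by simpa using hx03.symm)
  have hω0 : ω ≠ 0 := by rintro rfl; simp at hω3
  have hωq : ω ^ 2 + ω + 1 = 0 := by
    have h := hω3
    have hfac : (ω - 1) * (ω ^ 2 + ω + 1) = 0 := by linear_combination h
    rcases mul_eq_zero.mp hfac with h' | h'
    · exact absurd (by linear_combination h') hω1
    · exact h'
  have hω2ne1 : ω ^ 2 ≠ 1 := by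
    intro h
    apply hω1
    calc ω = ω * ω ^ 2 := by rw [h]; ring
      _ = ω ^ 3 := by ring
      _ = 1 := hω3
  have hωneω2 : ω ≠ ω ^ 2 := by
    intro h
    apply hω2ne1
    calc ω ^ 2 = ω * ω := by ring
      _ = ω * ω ^ 2 := by rw [← h]
      _ = ω ^ 3 := by ring
      _ = 1 := hω3
  -- the three 2-torsion x-coordinates
  have hcube1 : (ω * x0) ^ 3 = -c := by rw [mul_pow, hω3, hx03, one_mul]
  have hcube2 : (ω ^ 2 * x0) ^ 3 = -c := by
    rw [mul_pow, ← pow_mul, show 2 * 3 = 3 * 2 by ring, pow_mul, hω3, one_pow, one_mul, hx03]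
  have h0 := mordell_nonsingular hc hx03
  have h1 := mordell_nonsingular hc hcube1
  have h2 := mordell_nonsingular hc hcube2
  have hne01 : x0 ≠ ω * x0 := fun h =>
    hω1 (mul_right_cancel₀ hx00 (by linear_combination -h : ω * x0 = 1 * x0))
  have hne02 : x0 ≠ ω ^ 2 * x0 := fun h =>
    hω2ne1 (mul_right_cancel₀ hx00 (by linear_combination -h : ω ^ 2 * x0 = 1 * x0))
  have hne12 : ω * x0 ≠ ω ^ 2 * x0 := fun h => hωneω2 (mul_right_cancel₀ hx00 h)
  set Gker := AddMonoidHom.ker (smulAddHom ℤ (mordell c).Point (2 : ℤ)) with hGker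
  have memker : ∀ {x y : K} (h : (mordell c).Nonsingular x y), y = 0 →
      Point.some _ _ h ∈ Gker := by
    intro x y h hy
    subst hy
    rw [mem_ker_iff, two_smul_eq_zero_iff, some_eq_neg_iff]
  set A : Gker := ⟨Point.some _ _ h0, memker h0 rfl⟩ with hA
  set B : Gker := ⟨Point.some _ _ h1, memker h1 rfl⟩ with hB
  -- classification of kernel elements
  have hker : ∀ Q : Gker, (Q : (mordell c).Point) = 0 ∨ (Q : (mordell c).Point) = Point.some _ _ h0
      ∨ (Q : (mordell c).Point) = Point.some _ _ h1 ∨ (Q : (mordell c).Point) = Point.some _ _ h2 := by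
    rintro ⟨Qv, hQ⟩
    rw [mem_ker_iff, two_smul_eq_zero_iff] at hQ
    cases Qv with
    | zero => exact Or.inl rfl
    | @some x y h =>
      rw [some_eq_neg_iff] at hQ
      subst hQ
      have heq : (0 : K) ^ 2 = x ^ 3 + c := mordell_equation.mp h.1
      have hprod : (x - x0) * (x - ω * x0) * (x - ω ^ 2 * x0) = 0 := by
        have hexp : (x - x0) * (x - ω * x0) * (x - ω ^ 2 * x0) = x ^ 3 + c := by
          linear_combination (x0 ^ 2 * x - x0 * x ^ 2) * hωq + (x0 ^ 2 * x - x0 ^ 3) * hω3 - hx03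
        rw [hexp]
        linear_combination -heq
      rcases mul_eq_zero.mp hprod with h' | h'
      · rcases mul_eq_zero.mp h' with h'' | h''
        · have : x = x0 := by linear_combination h''
          subst this
          exact Or.inr (Or.inl rfl)
        · have : x = ω * x0 := by linear_combination h''
          subst this
          exact Or.inr (Or.inr (Or.inl rfl))
      · have : x = ω ^ 2 * x0 := by linear_combination h'
        subst this
        exact Or.inr (Or.inr (Or.inr rfl))
  have hvalinj : Function.Injective (fun Q : Gker => (Q : (mordell c).Point)) :=
    Subtype.coe_injective
  have hA0 : A ≠ 0 := by
    intro h
    exact Point.some_ne_zero h0 (by rw [hA] at h; exact congrArg Subtype.val h)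
  have hB0 : B ≠ 0 := by
    intro h
    exact Point.some_ne_zero h1 (by rw [hB] at h; exact congrArg Subtype.val h)
  have hABne : A ≠ B := by
    intro h
    have := congrArg Subtype.val h
    simp only [hA, hB] at this
    rw [Point.some.injEq] at this
    exact hne01 this.1
  have hAB0 : A + B ≠ 0 := by
    intro h
    have hv : Point.some _ _ h0 + Point.some _ _ h1 = 0 := congrArg Subtype.val h
    rw [add_eq_zero', Point.neg_some, Point.some.injEq] at hv
    exact hne01 hv.1
  have hABA : A + B ≠ A := fun h => hB0 (by
    have h' : A + B = A + 0 := by rw [add_zero]; exact h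
    exact add_left_cancel h')
  have hABB : A + B ≠ B := fun h => hA0 (by
    have : B + A = B + 0 := by rw [add_zero, add_comm]; exact h
    exact add_left_cancel this)
  -- ZMod 2 module structure on the kernel
  have hnsmul : ∀ x : Gker, (2 : ℕ) • x = 0 := by
    intro x
    apply Subtype.ext
    have hx := x.2
    rw [AddMonoidHom.mem_ker] at hx
    have : (2 : ℤ) • (x : (mordell c).Point) = 0 := hx
    calc ((2 : ℕ) • x : Gker).val = (2 : ℕ) • (x : (mordell c).Point) := rfl
      _ = (2 : ℤ) • (x : (mordell c).Point) := by rw [two_nsmul, two_zsmul]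
      _ = 0 := this
  letI : Module (ZMod 2) Gker := AddCommGroup.zmodModule hnsmul
  let f : ZMod 2 × ZMod 2 →+ Gker := AddMonoidHom.mk'
    (fun p => p.1 • A + p.2 • B) (by
      intro p q
      show (p.1 + q.1) • A + (p.2 + q.2) • B = _
      rw [add_smul, add_smul]
      abel)
  have hz : ∀ z : ZMod 2, z = 0 ∨ z = 1 := by decide
  have hf10 : f (1, 0) = A := by
    show (1 : ZMod 2) • A + (0 : ZMod 2) • B = A
    rw [one_smul, zero_smul, add_zero]
  have hf01 : f (0, 1) = B := by
    show (0 : ZMod 2) • A + (1 : ZMod 2) • B = B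
    rw [one_smul, zero_smul, zero_add]
  have hf11 : f (1, 1) = A + B := by
    show (1 : ZMod 2) • A + (1 : ZMod 2) • B = A + B
    rw [one_smul, one_smul]
  have hf00 : f (0, 0) = 0 := by
    show (0 : ZMod 2) • A + (0 : ZMod 2) • B = 0
    rw [zero_smul, zero_smul, add_zero]
  have hinj : Function.Injective f := by
    rw [injective_iff_map_eq_zero]
    rintro ⟨p1, p2⟩ hp
    rcases hz p1 with rfl | rfl <;> rcases hz p2 with rfl | rfl
    · rfl
    · rw [hf01] at hp; exact absurd hp hB0
    · rw [hf10] at hp; exact absurd hp hA0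
    · rw [hf11] at hp; exact absurd hp hAB0
  have hsurj : Function.Surjective f := by
    intro Q
    rcases hker Q with hv | hv | hv | hv
    · exact ⟨(0, 0), by rw [hf00]; exact (Subtype.ext hv).symm⟩
    · exact ⟨(1, 0), by rw [hf10]; exact (Subtype.ext hv).symm⟩
    · exact ⟨(0, 1), by rw [hf01]; exact (Subtype.ext hv).symm⟩
    · refine ⟨(1, 1), ?_⟩
      rw [hf11]
      have hABval := hker (A + B)
      rcases hABval with h' | h' | h' | h'
      · exact absurd (Subtype.ext h' : A + B = 0) hAB0
      · exact absurd (Subtype.ext h' : A + B = A) hABA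
      · exact absurd (Subtype.ext h' : A + B = B) hABB
      · exact Subtype.ext (h'.trans hv.symm)
  exact ⟨(AddEquiv.ofBijective f ⟨hinj, hsurj⟩).symm⟩

end MordellAux

namespace MordellAux

lemma card_order_three_of_torsion {M : Type} [AddCommGroup M]
    (e : (AddCommGroup.torsion M) ≃+ (ZMod 3 × ZMod 6)) :
    Nat.card {P : M | addOrderOf P = 3} = 8 := by
  have h8 : Fintype.card {q : ZMod 3 × ZMod 6 // 3 • q = 0 ∧ q ≠ 0} = 8 := by decide
  have hcard : Nat.card {q : ZMod 3 × ZMod 6 // 3 • q = 0 ∧ q ≠ 0} = 8 :=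
    Nat.card_eq_fintype_card.trans h8
  haveI : Fact (Nat.Prime 3) := ⟨by norm_num⟩
  have mem_of_ord : ∀ (P : M) (n : ℕ), 0 < n → addOrderOf P = n → P ∈ AddCommGroup.torsion M := by
    intro P n hn hP
    rw [AddCommGroup.mem_torsion]
    rw [← addOrderOf_pos_iff, hP]
    exact hn
  let Φ : {P : M | addOrderOf P = 3} ≃ {q : ZMod 3 × ZMod 6 | addOrderOf q = 3} :=
    { toFun := fun P => ⟨e ⟨P.val, mem_of_ord P.val 3 (by norm_num) P.2⟩, by
        have h1 := e.addOrderOf_eq ⟨P.val, mem_of_ord P.val 3 (by norm_num) P.2⟩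
        have h2 := AddSubgroup.addOrderOf_mk (H := AddCommGroup.torsion M) P.val
          (mem_of_ord P.val 3 (by norm_num) P.2)
        simp only [Set.mem_setOf_eq]
        rw [h1, h2]
        exact P.2⟩
      invFun := fun q => ⟨(e.symm q.val).val, by
        have h1 := AddSubgroup.addOrderOf_coe (e.symm q.val)
        have h2 := e.symm.addOrderOf_eq q.val
        simp only [Set.mem_setOf_eq]
        rw [h1, h2]
        exact q.2⟩
      left_inv := fun P => by
        apply Subtype.ext
        simp
      right_inv := fun q => by
        apply Subtype.ext
        simp only
        rw [show (⟨(e.symm q.val).val, _⟩ : AddCommGroup.torsion M) = e.symm q.val from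
          Subtype.ext rfl]
        simp }
  rw [Nat.card_congr Φ]
  have hset : {q : ZMod 3 × ZMod 6 | addOrderOf q = 3} =
      {q : ZMod 3 × ZMod 6 | 3 • q = 0 ∧ q ≠ 0} := by
    ext q
    simp only [Set.mem_setOf_eq]
    constructor
    · intro h
      refine ⟨by have := addOrderOf_nsmul_eq_zero q; rwa [h] at this, ?_⟩
      rintro rfl
      rw [addOrderOf_zero] at h
      norm_num at h
    · rintro ⟨h1, h2⟩
      exact addOrderOf_eq_prime h1 h2
  rw [hset]
  exact hcard

end MordellAux

namespace MordellAux

lemma exists_order_two_of_torsion {M : Type} [AddCommGroup M]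
    (e : (AddCommGroup.torsion M) ≃+ (ZMod 3 × ZMod 6)) :
    ∃ P : M, addOrderOf P = 2 := by
  have h2 : addOrderOf ((0, 3) : ZMod 3 × ZMod 6) = 2 := by
    haveI : Fact (Nat.Prime 2) := ⟨by norm_num⟩
    refine addOrderOf_eq_prime (by decide) (by decide)
  refine ⟨(e.symm (0, 3)).val, ?_⟩
  rw [AddSubgroup.addOrderOf_coe, e.symm.addOrderOf_eq, h2]

lemma no_Z3Z6 {K : Type} [Field K] [CharZero K] {c : K} (hc : c ≠ 0)
    (e : (AddCommGroup.torsion (mordell c).Point) ≃+ (ZMod 3 × ZMod 6)) : False := by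
  have h8 := card_order_three_of_torsion e
  have h2 := exists_order_two_of_torsion e
  obtain ⟨e2⟩ := ker_equiv_of hc (exists_omega hc h8) (exists_cube_root h2)
  -- two distinct points of order dividing two
  set A : (mordell c).Point := (e2.symm (1, 0)).val with hA
  set B : (mordell c).Point := (e2.symm (0, 1)).val with hB
  have hA2 : (2 : ℤ) • A = 0 := (e2.symm (1, 0)).2
  have hB2 : (2 : ℤ) • B = 0 := (e2.symm (0, 1)).2
  have hA0 : A ≠ 0 := by
    intro h
    have : e2.symm (1, 0) = 0 := Subtype.ext h
    have := congrArg e2 this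
    simp at this
  have hB0 : B ≠ 0 := by
    intro h
    have : e2.symm (0, 1) = 0 := Subtype.ext h
    have := congrArg e2 this
    simp at this
  have hABne : A ≠ B := by
    intro h
    have : e2.symm (1, 0) = e2.symm (0, 1) := Subtype.ext h
    have := congrArg e2 this
    simp at this
  -- push into the torsion subgroup
  have tA : A ∈ AddCommGroup.torsion (mordell c).Point := by
    rw [AddCommGroup.mem_torsion, isOfFinAddOrder_iff_nsmul_eq_zero]
    exact ⟨2, by norm_num, by rw [two_nsmul, ← two_zsmul]; exact hA2⟩
  have tB : B ∈ AddCommGroup.torsion (mordell c).Point := by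
    rw [AddCommGroup.mem_torsion, isOfFinAddOrder_iff_nsmul_eq_zero]
    exact ⟨2, by norm_num, by rw [two_nsmul, ← two_zsmul]; exact hB2⟩
  set u := e ⟨A, tA⟩ with hu
  set v := e ⟨B, tB⟩ with hv
  have hu2 : (2 : ℕ) • u = 0 := by
    rw [hu, ← map_nsmul]
    convert map_zero e
    apply Subtype.ext
    show (2 : ℕ) • A = 0
    rw [two_nsmul, ← two_zsmul]
    exact hA2
  have hv2 : (2 : ℕ) • v = 0 := by
    rw [hv, ← map_nsmul]
    convert map_zero e
    apply Subtype.ext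
    show (2 : ℕ) • B = 0
    rw [two_nsmul, ← two_zsmul]
    exact hB2
  have hu0 : u ≠ 0 := by
    intro h
    rw [hu] at h
    have h' : (⟨A, tA⟩ : AddCommGroup.torsion (mordell c).Point) = 0 := by
      simpa using congrArg e.symm h
    exact hA0 (Subtype.ext_iff.mp h')
  have hv0 : v ≠ 0 := by
    intro h
    rw [hv] at h
    have h' : (⟨B, tB⟩ : AddCommGroup.torsion (mordell c).Point) = 0 := by
      simpa using congrArg e.symm h
    exact hB0 (Subtype.ext_iff.mp h')
  have huv : u ≠ v := by
    intro h
    rw [hu, hv] at h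
    have h' : (⟨A, tA⟩ : AddCommGroup.torsion (mordell c).Point) = ⟨B, tB⟩ := by
      simpa using congrArg e.symm h
    have hAB : A = B :=
      congrArg (fun z : AddCommGroup.torsion (mordell c).Point => z.val) h'
    exact hABne hAB
  have : ∀ x y : ZMod 3 × ZMod 6, 2 • x = 0 → 2 • y = 0 → x ≠ 0 → y ≠ 0 → x = y := by decide
  exact huv (this u v hu2 hv2 hu0 hv0)

end MordellAux

open Classical in
theorem stmt_19 :
    (∀ (K : Type) [Field K] [NumberField K], Module.finrank ℚ K = 6 →
      ∀ c : K, c ≠ 0 →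
        Nat.card {P : (mordell c).Point | addOrderOf P = 3} = 8 →
        (∃ P : (mordell c).Point, addOrderOf P = 2) →
        Nonempty ((AddMonoidHom.ker (smulAddHom ℤ (mordell c).Point (2 : ℤ))) ≃+
          (ZMod 2 × ZMod 2))) ∧
    (∀ (K : Type) [Field K] [NumberField K], Module.finrank ℚ K = 6 →
      ∀ c : K, c ≠ 0 →
        ¬ Nonempty ((AddCommGroup.torsion (mordell c).Point) ≃+ (ZMod 3 × ZMod 6))) := by
  constructor
  · intro K _ _ _ c hc h8 h2
    exact MordellAux.ker_equiv_of hc (MordellAux.exists_omega hc h8)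
      (MordellAux.exists_cube_root h2)
  · rintro K _ _ _ c hc ⟨e⟩
    exact MordellAux.no_Z3Z6 hc e
end
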